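/- Define P_s(m, n) = (1 + a^m b^(n-m)) / 2 where a = 1 - 2p1, b = 1 - 2p2 with 0 < a < b < 1. Then for natural numbers m1 < m2 ≤ n_j, m1 ≤ m1', n_j ≤ n_l, with m1' - m1 ≤ n_l - n_j and m1' ≤ n_l, m2 + m1' - m1 ≤ n_l, we have P_s(m1, n_j) + P_s(m2 + m1' - m1, n_l) > P_s(m2, n_j) + P_s(m1', n_l). -/
import Mathlib


/-- No-logical-error probability given `m` "-1" syndromes out of `n` rounds. -/
noncomputable def Ps (a b : ℝ) (m n : ℕ) : ℝ := (1 + a ^ m * b ^ (n - m)) / 2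

lemma key_ineq (a b : ℝ) (ha : 0 < a) (hab : a < b) (hb : b < 1) (m d e k s : ℕ)
    (hd : d ≠ 0) (he : e ≠ 0) :
    a ^ (m + d) * b ^ k + a ^ (m + e) * b ^ (d + k + s)
      < a ^ m * b ^ (d + k) + a ^ (m + d + e) * b ^ (k + s) := by
  have hb0 : (0:ℝ) < b := ha.trans hab
  have h1 : a ^ d < b ^ d := pow_lt_pow_left₀ hab ha.le hd
  have h2 : a ^ e < 1 := pow_lt_one₀ ha.le (hab.trans hb) he
  have h3 : b ^ s ≤ 1 := pow_le_one₀ hb0.le hb.le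
  have h4 : a ^ e * b ^ s < 1 :=
    lt_of_le_of_lt (mul_le_of_le_one_right (pow_nonneg ha.le e) h3) h2
  have h5 : (0:ℝ) < a ^ m * b ^ k := mul_pos (pow_pos ha m) (pow_pos hb0 k)
  have expand : a ^ m * b ^ (d + k) + a ^ (m + d + e) * b ^ (k + s)
      - (a ^ (m + d) * b ^ k + a ^ (m + e) * b ^ (d + k + s))
      = (b ^ d - a ^ d) * (a ^ m * b ^ k) * (1 - a ^ e * b ^ s) := by
    simp [pow_add]; ring
  nlinarith [mul_pos (mul_pos (sub_pos.mpr h1) h5) (sub_pos.mpr h4)]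

/-- The exchange inequality: serving the fresher qubit (fewer "-1" syndromes)
first yields a strictly larger total no-error probability. -/
theorem stmt_5 (a b : ℝ) (ha : 0 < a) (hab : a < b) (hb : b < 1)
    (m1 m2 m1' nj nl : ℕ)
    (h12 : m1 < m2) (h2j : m2 ≤ nj) (h11' : m1 < m1') (hjl : nj ≤ nl)
    (hacc : m1' - m1 ≤ nl - nj) (h1l : m1' ≤ nl) (h2l : m2 + m1' - m1 ≤ nl) :
    Ps a b m2 nj + Ps a b m1' nl < Ps a b m1 nj + Ps a b (m2 + m1' - m1) nl := by
  set d := m2 - m1 with hd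
  set e := m1' - m1 with he
  set k := nj - m2 with hk
  set s := (nl - nj) - e with hs
  have e1 : m2 = m1 + d := by omega
  have e2 : m1' = m1 + e := by omega
  have e3 : nj - m2 = k := rfl
  have e4 : nl - m1' = d + k + s := by omega
  have e5 : nj - m1 = d + k := by omega
  have e6 : m2 + m1' - m1 = m1 + d + e := by omega
  have e7 : nl - (m1 + d + e) = k + s := by omega
  have hkey := key_ineq a b ha hab hb m1 d e k s (by omega) (by omega)
  simp only [Ps, e3, e4, e5, e6, e7]
  rw [e1, e2]
  linarith
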